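/- arXiv:1608.08647 — 7 statements merged into one kernel-verified Lean document; each statement's English description precedes it below -/
import Mathlib

section
/- Let $N$ be a positive integer and let $\chi$ be a Dirichlet character modulo $N$ with complex values that is not the principal (trivial) character. Then the Dirichlet L-function of $\chi$ does not vanish at $s = 1$: $L(\chi, 1) \neq 0$. -/
/-- Dirichlet's non-vanishing theorem: if `χ` is a non-principal Dirichlet character
modulo `N`, then `L(χ, 1) ≠ 0`. -/
theorem stmt2 (N : ℕ) [NeZero N] (χ : DirichletCharacter ℂ N) (hχ : χ ≠ 1) :
    DirichletCharacter.LFunction χ 1 ≠ 0 := by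
  exact DirichletCharacter.LFunction_ne_zero_of_one_le_re χ (.inl hχ) (by norm_num)
end

section
/- Let $a$ be a positive integer and $p$ a prime not dividing $a$. Let $f$ be the multiplicative order of $p$ in the unit group $(\mathbb{Z}/a\mathbb{Z})^{\times}$, and let $g = \phi(a)/f$. Then for every complex number $T$, $\prod_{\chi} (1 - \chi(p)\, T) = (1 - T^{f})^{g}$, where the product runs over all Dirichlet characters $\chi$ modulo $a$ with complex values. -/
/-!
For `u` in a finite abelian group `G`, evaluation at `u` maps the character group onto the
`f`-th roots of unity, `f = orderOf u`: its image `S` consists of `f`-th roots of unity, and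
since characters separate points, `u ^ |S| = 1`, so `f ∣ |S|`. All fibres of this homomorphism
have the size `|G| / f` of its kernel, so the product is
`(∏_{ζ ^ f = 1} (1 - ζ T)) ^ (|G| / f) = (1 - T ^ f) ^ (|G| / f)`.
-/

open Finset
open Polynomial (nthRootsFinset)

theorem MonoidHom.prod_comp_eq_prod_image_pow {G H M : Type*} [Group G] [Fintype G] [Monoid H]
    [DecidableEq H] [CommMonoid M] (φ : G →* H) (F : H → M) :
    ∏ g, F (φ g) = ∏ h ∈ univ.image φ, F h ^ (Fintype.card G / #(univ.image φ)) := by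
  have hfibre : ∀ h ∈ univ.image φ, #{g | φ g = h} = #{g | φ g = 1} := fun h hh =>
    card_fiber_eq_of_mem_range φ (by simpa using hh) ⟨1, map_one φ⟩
  have hcard : Fintype.card G = #(univ.image φ) * #{g | φ g = 1} := by
    rw [← card_univ, card_eq_sum_card_image φ, sum_congr rfl hfibre, sum_const, smul_eq_mul]
  rw [prod_comp, hcard, Nat.mul_div_cancel_left _ (univ_nonempty.image φ).card_pos]
  exact prod_congr rfl fun h hh => by rw [hfibre h hh]

section

variable {G R : Type*} [CommGroup G] [Finite G] [CommRing R] [IsDomain R]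
  [HasEnoughRootsOfUnity R (Monoid.exponent G)]

theorem MonoidHom.range_eval_eq_rootsOfUnity (u : G) :
    (MonoidHom.eval u : (G →* Rˣ) →* Rˣ).range = rootsOfUnity (orderOf u) R := by
  set ev : (G →* Rˣ) →* Rˣ := MonoidHom.eval u
  have : Finite ev.range := Set.finite_range ev
  have := NeZero.of_pos (orderOf_pos u)
  have hle : ev.range ≤ rootsOfUnity (orderOf u) R := by
    rintro _ ⟨ψ, rfl⟩
    rw [mem_rootsOfUnity, MonoidHom.eval_apply_apply, ← map_pow, pow_orderOf_eq_one, map_one]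
  have hdvd : orderOf u ∣ Nat.card ev.range := by
    refine orderOf_dvd_of_pow_eq_one <| (CommGroup.forall_apply_eq_apply_iff G (M := R)).mp
      fun ψ => ?_
    have : (⟨ψ u, ψ, rfl⟩ : ev.range) ^ Nat.card ev.range = 1 := pow_card_eq_one'
    rw [map_pow, map_one]
    exact congrArg Subtype.val this
  exact Subgroup.eq_of_le_of_card_ge hle <|
    (card_rootsOfUnity R _).trans (Nat.le_of_dvd Nat.card_pos hdvd)

theorem MonoidHom.image_apply_eq_nthRootsFinset [Fintype (G →* Rˣ)] [DecidableEq R] (u : G) :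
    univ.image (fun ψ : G →* Rˣ => (ψ u : R)) = nthRootsFinset (orderOf u) (1 : R) := by
  ext w
  rw [Polynomial.mem_nthRootsFinset (orderOf_pos u)]
  constructor
  · intro hw
    obtain ⟨ψ, -, rfl⟩ := mem_image.mp hw
    rw [← Units.val_pow_eq_pow_val, ← map_pow, pow_orderOf_eq_one, map_one, Units.val_one]
  · intro hw
    have := NeZero.of_pos (orderOf_pos u)
    obtain ⟨ψ, hψ⟩ : (rootsOfUnity.mkOfPowEq w hw : Rˣ) ∈ (MonoidHom.eval u).range := by
      rw [MonoidHom.range_eval_eq_rootsOfUnity]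
      exact (rootsOfUnity.mkOfPowEq w hw).2
    refine mem_image.mpr ⟨ψ, mem_univ _, ?_⟩
    rw [← rootsOfUnity.coe_mkOfPowEq hw, ← hψ, MonoidHom.eval_apply_apply]

theorem MonoidHom.prod_one_sub_apply_mul [Fintype (G →* Rˣ)] (u : G) (T : R) :
    ∏ ψ : G →* Rˣ, (1 - (ψ u : R) * T) = (1 - T ^ orderOf u) ^ (Nat.card G / orderOf u) := by
  classical
  have : NeZero (Monoid.exponent G) := ⟨Monoid.exponent_ne_zero_of_finite⟩
  have := HasEnoughRootsOfUnity.of_dvd R (Monoid.order_dvd_exponent u)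
  obtain ⟨ζ, hζ⟩ := HasEnoughRootsOfUnity.exists_primitiveRoot R (orderOf u)
  let ev : (G →* Rˣ) →* R := (Units.coeHom R).comp (MonoidHom.eval u)
  have himage : univ.image ev = nthRootsFinset (orderOf u) (1 : R) :=
    MonoidHom.image_apply_eq_nthRootsFinset u
  have hcard : Fintype.card (G →* Rˣ) = Nat.card G := by
    rw [← Nat.card_eq_fintype_card, CommGroup.card_monoidHom_of_hasEnoughRootsOfUnity]
  have hcyclotomic :
      1 - T ^ orderOf u = ∏ w ∈ nthRootsFinset (orderOf u) (1 : R), (1 - w * T) := by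
    simpa using hζ.pow_sub_pow_eq_prod_sub_mul 1 T (orderOf_pos u)
  calc ∏ ψ : G →* Rˣ, (1 - (ψ u : R) * T)
      = ∏ w ∈ univ.image ev, (1 - w * T) ^ (Fintype.card (G →* Rˣ) / #(univ.image ev)) :=
        ev.prod_comp_eq_prod_image_pow fun w => 1 - w * T
    _ = (1 - T ^ orderOf u) ^ (Nat.card G / orderOf u) := by
        rw [himage, prod_pow, hζ.card_nthRootsFinset, hcard, hcyclotomic]

end

theorem MulChar.prod_one_sub_apply_mul {M R : Type*} [CommMonoid M] [Finite M] [CommRing R]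
    [IsDomain R] [HasEnoughRootsOfUnity R (Monoid.exponent Mˣ)] [Fintype (MulChar M R)]
    (u : Mˣ) (T : R) :
    ∏ χ : MulChar M R, (1 - χ u * T) = (1 - T ^ orderOf u) ^ (Nat.card Mˣ / orderOf u) := by
  have : Fintype (Mˣ →* Rˣ) := Fintype.ofFinite _
  rw [← MonoidHom.prod_one_sub_apply_mul]
  exact Fintype.prod_equiv equivToUnitHom _ _ fun χ => by rw [coe_equivToUnitHom]

theorem stmt3_general (a : ℕ) (ha : 0 < a) (p : ℕ) (hpa : Nat.Coprime p a)
    (f g : ℕ) (hf : f = orderOf (ZMod.unitOfCoprime p hpa))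
    (hg : g = Nat.totient a / f) (T : ℂ) :
    ∏ χ : DirichletCharacter ℂ a, (1 - χ ((p : ℕ) : ZMod a) * T) = (1 - T ^ f) ^ g := by
  have : NeZero a := ⟨ha.ne'⟩
  have : NeZero ((Monoid.exponent (ZMod a)ˣ : ℕ) : ℂ) :=
    ⟨Nat.cast_ne_zero.mpr Monoid.exponent_ne_zero_of_finite⟩
  subst hf hg
  rw [← ZMod.coe_unitOfCoprime p hpa, MulChar.prod_one_sub_apply_mul, Nat.card_eq_fintype_card,
    ZMod.card_units_eq_totient]

/-- For a prime `p` not dividing `a`, with `f` the multiplicative order of `p` in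
`(ZMod a)ˣ` and `g = φ(a) / f`, we have `∏_χ (1 - χ(p) T) = (1 - T ^ f) ^ g`,
the product over all Dirichlet characters modulo `a` with complex values. -/
theorem stmt3 (a : ℕ) (ha : 0 < a) (p : ℕ) (hp : p.Prime) (hpa : Nat.Coprime p a)
    (f g : ℕ) (hf : f = orderOf (ZMod.unitOfCoprime p hpa))
    (hg : g = Nat.totient a / f) (T : ℂ) :
    ∏ χ : DirichletCharacter ℂ a, (1 - χ ((p : ℕ) : ZMod a) * T) = (1 - T ^ f) ^ g :=
  stmt3_general a ha p hpa f g hf hg T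
end

section
/- Let $a$ be a positive integer and define $\zeta_a(s) = \prod_{\chi} L(\chi, s)$, the product over all Dirichlet characters $\chi$ modulo $a$ with complex values. For each prime $p \nmid a$, let $f(p)$ be the multiplicative order of $p$ in $(\mathbb{Z}/a\mathbb{Z})^{\times}$ and $g(p) = \phi(a)/f(p)$. Then for every complex $s$ with $\mathrm{Re}(s) > 1$, $\zeta_a(s) = \prod_{p \nmid a} \left(1 - p^{-f(p)s}\right)^{-g(p)}$, the product converging over all primes $p$ not dividing $a$. -/
/-!
Multiplying the Euler products of the `L(χ, s)` prime by prime, the factor at `p` is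
`∏_χ (1 - χ(p) p^{-s})⁻¹`. For a unit `u` of order `f` modulo `a`, evaluation `χ ↦ χ(u)` is a
homomorphism on the character group whose kernel, the characters trivial on `⟨u⟩`, has `φ(a)/f`
elements by duality; hence its image is exactly the group of `f`-th roots of unity, each hit
`φ(a)/f` times, and `∏_χ (1 - χ(u) z) = (∏_{ζ^f = 1} (1 - ζ z))^{φ(a)/f} = (1 - z^f)^{φ(a)/f}`.
At primes `p ∣ a` every `χ(p)` vanishes, and `orderOf (p : ZMod a) = 0` makes the stated factor
`1` as well, so the product may be restricted to `p ∤ a`.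
-/

open Finset

namespace MonoidHom

variable {G M : Type*} [Group G] [Fintype G] [Monoid M] [DecidableEq M] (φ : G →* M)

theorem prod_comp_eq_prod_image_pow_s7 {N : Type*} [CommMonoid N] (F : M → N) :
    ∏ g, F (φ g) = (∏ m ∈ univ.image φ, F m) ^ #{g | φ g = 1} := by
  rw [prod_comp, ← prod_pow]
  refine prod_congr rfl fun m hm => ?_
  rw [card_fiber_eq_of_mem_range φ (by simpa using hm) ⟨1, map_one φ⟩]

theorem card_image_mul_card_fiber_one : #(univ.image φ) * #{g | φ g = 1} = Fintype.card G := by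
  rw [← card_univ, card_eq_sum_card_image φ univ, sum_const_nat fun m hm =>
    card_fiber_eq_of_mem_range φ (by simpa using hm) ⟨1, map_one φ⟩]

end MonoidHom

namespace MulChar

variable {M R : Type*} [CommMonoid M] [CommRing R]

noncomputable def evalUnitHom (u : Mˣ) : MulChar M R →* R where
  toFun χ := χ u
  map_one' := one_apply_coe u
  map_mul' χ ψ := mul_apply χ ψ u

variable [Finite M] [HasEnoughRootsOfUnity R (Monoid.exponent Mˣ)]

theorem exists_isPrimitiveRoot_orderOf (u : Mˣ) : ∃ ζ : R, IsPrimitiveRoot ζ (orderOf u) :=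
  have : NeZero (Monoid.exponent Mˣ) := ⟨Monoid.exponent_ne_zero_of_finite⟩
  have : HasEnoughRootsOfUnity R (orderOf u) := .of_dvd R (Monoid.order_dvd_exponent u)
  HasEnoughRootsOfUnity.exists_primitiveRoot R (orderOf u)

variable [Fintype (MulChar M R)]

theorem card_filter_apply_eq_one [DecidableEq R] (u : Mˣ) :
    #{χ : MulChar M R | χ u = 1} = Nat.card Mˣ / orderOf u := by
  have hdual (χ : MulChar M R) :
      χ ∈ (subgroupOrderIsoSubgroupMulChar M R (Subgroup.zpowers u)).ofDual ↔ χ u = 1 := by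
    have hker (m : Mˣ) : χ m = 1 ↔ m ∈ χ.toUnitHom.ker := by
      rw [MonoidHom.mem_ker, ← Units.val_eq_one, coe_toUnitHom]
    simp only [mem_subgroupOrderIsoSubgroupMulChar_iff, hker]
    exact Subgroup.zpowers_le
  rw [← Fintype.card_subtype, ← Nat.card_eq_fintype_card,
    ← Nat.card_congr (Equiv.subtypeEquivRight hdual), card_subgroupOrderIsoSubgroupMulChar,
    ← Subgroup.index, ← (Subgroup.zpowers u).index_mul_card, Nat.card_zpowers,
    Nat.mul_div_cancel _ (_root_.orderOf_pos u)]

variable [IsDomain R]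

theorem image_apply_eq_nthRootsFinset [DecidableEq R] (u : Mˣ) :
    univ.image (fun χ : MulChar M R => χ u) = Polynomial.nthRootsFinset (orderOf u) (1 : R) := by
  have hdvd := orderOf_dvd_natCard u
  have hcard : #(univ.image fun χ : MulChar M R => χ u) = orderOf u := by
    have hprod :
        #(univ.image fun χ : MulChar M R => χ u) * (Nat.card Mˣ / orderOf u) = Nat.card Mˣ := by
      rw [← card_filter_apply_eq_one (R := R) u, ← card_eq_card_units_of_hasEnoughRootsOfUnity M R,
        Nat.card_eq_fintype_card]
      exact (evalUnitHom u).card_image_mul_card_fiber_one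
    refine Nat.eq_of_mul_eq_mul_right
      (Nat.div_pos (Nat.le_of_dvd Nat.card_pos hdvd) (_root_.orderOf_pos u)) ?_
    rw [hprod, Nat.mul_div_cancel' hdvd]
  obtain ⟨ζ, hζ⟩ := exists_isPrimitiveRoot_orderOf (R := R) u
  refine eq_of_subset_of_card_le (fun z hz => ?_) (by rw [hcard, hζ.card_nthRootsFinset])
  obtain ⟨χ, -, rfl⟩ := mem_image.mp hz
  rw [Polynomial.mem_nthRootsFinset (_root_.orderOf_pos u), ← map_pow,
    ← Units.val_pow_eq_pow_val, pow_orderOf_eq_one, Units.val_one, map_one]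

theorem prod_one_sub_apply_units_mul (u : Mˣ) (z : R) :
    ∏ χ : MulChar M R, (1 - χ u * z) = (1 - z ^ orderOf u) ^ (Nat.card Mˣ / orderOf u) := by
  -- not `classical`: the filters below must decide `χ u = 1` through a `DecidableEq R` instance
  let _ : DecidableEq R := Classical.decEq R
  obtain ⟨ζ, hζ⟩ := exists_isPrimitiveRoot_orderOf (R := R) u
  refine ((evalUnitHom u).prod_comp_eq_prod_image_pow_s7 (fun w => 1 - w * z)).trans ?_
  change (∏ w ∈ univ.image (fun χ : MulChar M R => χ u), (1 - w * z)) ^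
    #{χ : MulChar M R | χ u = 1} = _
  rw [image_apply_eq_nthRootsFinset, card_filter_apply_eq_one u,
    ← hζ.pow_sub_pow_eq_prod_sub_mul 1 z (_root_.orderOf_pos u), one_pow]

theorem prod_one_sub_apply_mul_s7 (x : M) (z : R) :
    ∏ χ : MulChar M R, (1 - χ x * z) = (1 - z ^ orderOf x) ^ (Nat.card Mˣ / orderOf x) := by
  by_cases hx : IsUnit x
  · obtain ⟨u, rfl⟩ := hx
    rw [orderOf_units]
    exact prod_one_sub_apply_units_mul u z
  · simp [map_nonunit _ hx, orderOf_eq_zero (mt IsOfFinOrder.isUnit hx)]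

end MulChar

theorem DirichletCharacter.prod_inv_one_sub_mul_cpow {a : ℕ} [NeZero a] (n : ℕ) (s : ℂ) :
    ∏ χ : DirichletCharacter ℂ a, (1 - χ n * (n : ℂ) ^ (-s))⁻¹ =
      ((1 - (n : ℂ) ^ (-(orderOf (n : ZMod a) : ℂ) * s)) ^
        (a.totient / orderOf (n : ZMod a)))⁻¹ := by
  rw [prod_inv_distrib, MulChar.prod_one_sub_apply_mul_s7, Nat.card_eq_fintype_card,
    ZMod.card_units_eq_totient, ← Complex.cpow_nat_mul, mul_neg, neg_mul]

/-- Product expansion of `ζ_a(s) = ∏_χ L(χ, s)`: for `Re s > 1`,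
`ζ_a(s) = ∏_{p ∤ a} (1 - p^{-f(p) s})^{-g(p)}`, where `f(p)` is the multiplicative order
of `p` modulo `a` and `g(p) = φ(a)/f(p)`, the product converging over primes `p ∤ a`. -/
theorem stmt7 (a : ℕ) (ha : 0 < a) (s : ℂ) (hs : 1 < s.re) :
    HasProd
      (fun p : {p : Nat.Primes // ¬ (p : ℕ) ∣ a} =>
        ((1 - ((p.1 : ℕ) : ℂ) ^ (-(orderOf (((p.1 : ℕ) : ℕ) : ZMod a) : ℂ) * s)) ^
            (Nat.totient a / orderOf (((p.1 : ℕ) : ℕ) : ZMod a)))⁻¹)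
      (∏ χ : DirichletCharacter ℂ a, LSeries (fun n => χ ((n : ℕ) : ZMod a)) s) := by
  have : NeZero a := ⟨ha.ne'⟩
  have hEuler := hasProd_prod fun χ (_ : χ ∈ univ) =>
    DirichletCharacter.LSeries_eulerProduct_hasProd (N := a) χ hs
  simp only [DirichletCharacter.prod_inv_one_sub_mul_cpow] at hEuler
  refine (hasProd_subtype_iff_of_mulSupport_subset (s := {p : Nat.Primes | ¬ (p : ℕ) ∣ a})
    fun p hp hpa => hp ?_).mpr hEuler
  have hp : ¬IsUnit ((p : ℕ) : ZMod a) :=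
    (ZMod.isUnit_prime_iff_not_dvd p.prop).not.mpr (not_not.mpr hpa)
  simp [orderOf_eq_zero (mt IsOfFinOrder.isUnit hp)]
end

section
/- Let $a$ and $b$ be positive integers with $\gcd(a,b)=1$. Then the sum of reciprocals of the primes congruent to $b$ modulo $a$ diverges: $\sum_{p \text{ prime},\ p \equiv b \pmod a} \dfrac{1}{p} = \infty$. -/
/-!
For a unit `a` modulo `q`, the series `∑_{p ≡ a} log p / p ^ x` is at least
`φ(q)⁻¹ / (x - 1) - C` as `x → 1⁺`; this is the analytic input of Mathlib's proof of Dirichlet's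
theorem. Since `log p / p ^ x ≤ (x - 1)⁻¹ / p`, splitting off the finitely many primes below `N`
gives `φ(q)⁻¹ ≤ ∑_{p ≥ N, p ≡ a} 1 / p` for every `N`, so the series `∑_{p ≡ a} 1 / p` cannot
converge.
-/

open ArithmeticFunction vonMangoldt Filter Topology LSeries

lemma Real.log_div_rpow_le_inv_sub_one_div {x : ℝ} (hx : 1 < x) {y : ℝ} (hy : 0 ≤ y) :
    Real.log y / y ^ x ≤ (x - 1)⁻¹ / y := by
  rcases hy.eq_or_lt with rfl | hy
  · simp
  have hx₁ : 0 < x - 1 := sub_pos.mpr hx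
  calc Real.log y / y ^ x ≤ y ^ (x - 1) / (x - 1) / y ^ x := by
        gcongr; exact Real.log_le_rpow_div hy.le hx₁
    _ = (x - 1)⁻¹ / y := by
        rw [Real.rpow_sub hy, Real.rpow_one]; field_simp

lemma div_natCast_rpow_le_div {c x : ℝ} (hc : 0 ≤ c) (hx : 1 ≤ x) (n : ℕ) :
    c / (n : ℝ) ^ x ≤ c / n := by
  rcases n.eq_zero_or_pos with rfl | hn
  · simp [Real.zero_rpow (by linarith : x ≠ 0)]
  refine div_le_div_of_nonneg_left hc (mod_cast hn) ?_
  simpa using Real.rpow_le_rpow_of_exponent_le (mod_cast hn : (1 : ℝ) ≤ n) hx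

lemma le_of_forall_sub_mul_le {a b K : ℝ} (h : ∀ ε ∈ Set.Ioc (0 : ℝ) 1, a - K * ε ≤ b) :
    a ≤ b := by
  have hcont : Continuous fun ε : ℝ ↦ a - K * ε := by fun_prop
  exact le_of_tendsto ((hcont.tendsto' 0 a (by simp)).mono_left nhdsWithin_le_nhds)
    (eventually_of_mem (Ioc_mem_nhdsGT one_pos) h)

namespace ArithmeticFunction.vonMangoldt

variable {q : ℕ} {a : ZMod q}

noncomputable def primeReciprocal (a : ZMod q) : ℕ → ℝ :=
  {p : ℕ | p.Prime ∧ (p : ZMod q) = a}.indicator fun n ↦ 1 / n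

lemma prime_residueClass_div_rpow_le {x : ℝ} (hx : 1 < x) (n : ℕ) :
    (if n.Prime then residueClass a n else 0) / (n : ℝ) ^ x ≤
      (x - 1)⁻¹ * primeReciprocal a n := by
  by_cases hn : n.Prime ∧ (n : ZMod q) = a
  · simpa [primeReciprocal, hn, residueClass, vonMangoldt_apply_prime, div_eq_mul_inv] using
      Real.log_div_rpow_le_inv_sub_one_div hx n.cast_nonneg
  · have hres : (if n.Prime then residueClass a n else 0) = 0 := by
      split_ifs with hp
      · exact Set.indicator_of_notMem (s := {n : ℕ | (n : ZMod q) = a}) (fun h ↦ hn ⟨hp, h⟩) _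
      · rfl
    simp [primeReciprocal, hn, hres]

lemma tsum_prime_residueClass_div_rpow_le (hf : Summable (primeReciprocal a)) {x : ℝ}
    (hx : 1 < x) (N : ℕ) :
    ∑' n : ℕ, (if n.Prime then residueClass a n else 0) / (n : ℝ) ^ x ≤
      ∑ n ∈ Finset.range N, (if n.Prime then residueClass a n else 0) / n +
        (x - 1)⁻¹ * ∑' n, primeReciprocal a (n + N) := by
  have hnonneg (n : ℕ) : 0 ≤ (if n.Prime then residueClass a n else 0) := by
    positivity [residueClass_nonneg a n]
  have hs : Summable fun n : ℕ ↦ (if n.Prime then residueClass a n else 0) / (n : ℝ) ^ x :=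
    (hf.mul_left (x - 1)⁻¹).of_nonneg_of_le (fun n ↦ by positivity [hnonneg n])
      (prime_residueClass_div_rpow_le hx)
  rw [← hs.sum_add_tsum_nat_add N, ← tsum_mul_left]
  exact add_le_add
    (Finset.sum_le_sum fun n _ ↦ div_natCast_rpow_le_div (hnonneg n) hx.le n)
    (((summable_nat_add_iff N).mpr hs).tsum_le_tsum
      (fun n ↦ prime_residueClass_div_rpow_le hx (n + N))
      ((summable_nat_add_iff N).mpr (hf.mul_left _)))

variable [NeZero q]

lemma exists_prime_residueClass_lower_bound (ha : IsUnit a) :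
    ∃ C : ℝ, ∀ {x : ℝ}, x ∈ Set.Ioc 1 2 →
      (q.totient : ℝ)⁻¹ / (x - 1) - C ≤
        ∑' n : ℕ, (if n.Prime then residueClass a n else 0) / (n : ℝ) ^ x := by
  obtain ⟨C, hC⟩ := LSeries_residueClass_lower_bound ha
  refine ⟨C + ∑' n : ℕ, (if n.Prime then 0 else residueClass a n) / n, fun {x} hx ↦ ?_⟩
  have hs : Summable fun n : ℕ ↦ residueClass a n / (n : ℝ) ^ x :=
    summable_real_of_abscissaOfAbsConv_lt <|
      (abscissaOfAbsConv_residueClass_le_one a).trans_lt <| mod_cast hx.1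
  have hsplit (n : ℕ) : residueClass a n / (n : ℝ) ^ x =
      (if n.Prime then residueClass a n else 0) / (n : ℝ) ^ x +
        (if n.Prime then 0 else residueClass a n) / (n : ℝ) ^ x := by
    split_ifs <;> simp
  have hnonneg (n : ℕ) : 0 ≤ residueClass a n := residueClass_nonneg a n
  have hs_prime : Summable fun n : ℕ ↦ (if n.Prime then residueClass a n else 0) / (n : ℝ) ^ x :=
    hs.of_nonneg_of_le (fun n ↦ by positivity [hnonneg n])
      (fun n ↦ div_le_div_of_nonneg_right (by split_ifs <;> simp [hnonneg n]) (by positivity))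
  have hs_nonprime :
      Summable fun n : ℕ ↦ (if n.Prime then 0 else residueClass a n) / (n : ℝ) ^ x :=
    hs.of_nonneg_of_le (fun n ↦ by positivity [hnonneg n])
      (fun n ↦ div_le_div_of_nonneg_right (by split_ifs <;> simp [hnonneg n]) (by positivity))
  have h_nonprime : ∑' n : ℕ, (if n.Prime then 0 else residueClass a n) / (n : ℝ) ^ x ≤
      ∑' n : ℕ, (if n.Prime then 0 else residueClass a n) / n :=
    hs_nonprime.tsum_le_tsum
      (fun n ↦ div_natCast_rpow_le_div (by positivity [hnonneg n]) hx.1.le n)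
      (summable_residueClass_non_primes_div a)
  have := hC hx
  rw [tsum_congr hsplit, hs_prime.tsum_add hs_nonprime] at this
  linarith

theorem not_summable_primeReciprocal (ha : IsUnit a) : ¬ Summable (primeReciprocal a) := by
  intro hf
  obtain ⟨C, hC⟩ := exists_prime_residueClass_lower_bound ha
  have htail (N : ℕ) : (q.totient : ℝ)⁻¹ ≤ ∑' n, primeReciprocal a (n + N) := by
    set B := ∑ n ∈ Finset.range N, (if n.Prime then residueClass a n else 0) / n
    refine le_of_forall_sub_mul_le (K := C + B) fun ε hε ↦ ?_
    have hx : 1 + ε ∈ Set.Ioc 1 2 := ⟨by linarith [hε.1], by linarith [hε.2]⟩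
    have h := (hC hx).trans (tsum_prime_residueClass_div_rpow_le hf hx.1 N)
    rw [add_sub_cancel_left] at h
    have h' := mul_le_mul_of_nonneg_left h hε.1.le
    rw [mul_sub, mul_add, mul_div_cancel₀ _ hε.1.ne', ← mul_assoc, mul_inv_cancel₀ hε.1.ne',
      one_mul] at h'
    linarith
  have hφ : 0 < (q.totient : ℝ)⁻¹ := inv_pos.mpr (mod_cast q.totient.pos_of_neZero)
  exact hφ.not_ge (ge_of_tendsto' (tendsto_sum_nat_add _) htail)

end ArithmeticFunction.vonMangoldt

lemma Nat.not_summable_one_div_prime_mod {a b : ℕ} (ha : 0 < a) (hab : a.Coprime b) :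
    ¬ Summable fun p : {p : ℕ // p.Prime ∧ p % a = b % a} ↦ (1 : ℝ) / (p : ℕ) := by
  have : NeZero a := ⟨ha.ne'⟩
  have hset : {p : ℕ | p.Prime ∧ p % a = b % a} = {p : ℕ | p.Prime ∧ (p : ZMod a) = b} := by
    simp only [ZMod.natCast_eq_natCast_iff']
  intro h
  have h' := (summable_subtype_iff_indicator (f := fun n : ℕ ↦ (1 : ℝ) / n)
    (s := {p : ℕ | p.Prime ∧ p % a = b % a})).mp h
  rw [hset] at h'
  exact not_summable_primeReciprocal ((ZMod.isUnit_iff_coprime b a).mpr hab.symm) h'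

theorem stmt9_general (a b : ℕ) (ha : 0 < a) (hab : Nat.gcd a b = 1) :
    ∑' p : {p : ℕ // p.Prime ∧ p % a = b % a}, (1 : ENNReal) / ((p : ℕ) : ENNReal) = ⊤ := by
  have hcoe (p : {p : ℕ // p.Prime ∧ p % a = b % a}) :
      (1 : ENNReal) / ((p : ℕ) : ENNReal) = ((1 / (p : ℕ) : NNReal) : ENNReal) := by
    rw [ENNReal.coe_div (mod_cast p.2.1.ne_zero), ENNReal.coe_one, ENNReal.coe_natCast]
  rw [tsum_congr hcoe, ← not_ne_iff, ENNReal.tsum_coe_ne_top_iff_summable_coe]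
  simpa using Nat.not_summable_one_div_prime_mod ha hab

/-- The sum of reciprocals of the primes congruent to `b` modulo `a` diverges
(for `a`, `b` coprime positive integers). -/
theorem stmt9 (a b : ℕ) (ha : 0 < a) (hb : 0 < b) (hab : Nat.gcd a b = 1) :
    ∑' p : {p : ℕ // p.Prime ∧ p % a = b % a}, (1 : ENNReal) / ((p : ℕ) : ENNReal) = ⊤ :=
  stmt9_general a b ha hab
end

section
/- Let $q$ be a (rational) prime with $q \equiv 3 \pmod 4$, so that $q$ is a prime element of $\mathbb{Z}[i]$, and let $a, b$ be integers such that $q$ does not divide $a + bi$ in $\mathbb{Z}[i]$. Then the residue class of $a+bi$ in $\mathbb{Z}[i]/q\mathbb{Z}[i]$ is a square if and only if the Legendre symbol $\left(\frac{a^2+b^2}{q}\right)$ equals $1$. -/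
/-!
Since `q` is inert in `ℤ[i]`, the quotient `F = ℤ[i]/(q)` is a field with `q²` elements, and
Euler's criterion says that `x ∈ Fˣ` is a square iff `x ^ ((q² - 1) / 2) = 1`. The Frobenius
`x ↦ x ^ q` of `F` is complex conjugation, because `i ^ q = -i` for `q ≡ 3 (mod 4)`; hence
`x ^ (q + 1) = x * x̄` is the norm `a² + b²`, which lies in the prime field `𝔽_q`. As
`(q² - 1) / 2 = (q + 1) (q - 1) / 2`, the criterion for `x` in `F` becomes Euler's criterion for
`a² + b²` in `𝔽_q`.
-/

open Ideal

theorem FiniteField.isSquare_iff_isSquare_of_pow_eq_map {K F : Type*} [Field K] [Fintype K]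
    [Field F] [Fintype F] (hK : ringChar K ≠ 2) (hF : ringChar F ≠ 2) (φ : K →+* F) {x : F}
    (hx : x ≠ 0) {c : K} {e : ℕ} (he : Fintype.card F / 2 = e * (Fintype.card K / 2))
    (hxc : x ^ e = φ c) :
    IsSquare x ↔ IsSquare c := by
  have hc : c ≠ 0 := by
    rintro rfl
    exact hx (eq_zero_of_pow_eq_zero (hxc.trans (map_zero φ)))
  rw [isSquare_iff hF hx, isSquare_iff hK hc, he, pow_mul, hxc, ← map_pow, ← map_one φ,
    φ.injective.eq_iff]

namespace GaussianInt

theorem mk_eq_mk_iff (n : ℕ) (z w : GaussianInt) :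
    Ideal.Quotient.mk (span {(n : GaussianInt)}) z =
        Ideal.Quotient.mk (span {(n : GaussianInt)}) w ↔
      (z.re : ZMod n) = w.re ∧ (z.im : ZMod n) = w.im := by
  rw [Ideal.Quotient.eq, mem_span_singleton, ← Int.cast_natCast, Zsqrtd.intCast_dvd,
    ZMod.intCast_eq_intCast_iff_dvd_sub, ZMod.intCast_eq_intCast_iff_dvd_sub, Zsqrtd.re_sub,
    Zsqrtd.im_sub, dvd_sub_comm, dvd_sub_comm (b := z.im)]

theorem natCard_quotient_span_natCast (n : ℕ) [NeZero n] :
    Nat.card (GaussianInt ⧸ span {(n : GaussianInt)}) = n ^ 2 := by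
  let g : ZMod n × ZMod n → GaussianInt ⧸ span {(n : GaussianInt)} :=
    fun u => Ideal.Quotient.mk _ ⟨u.1.val, u.2.val⟩
  have hg : g.Bijective := by
    refine ⟨fun u v huv => ?_, fun x => ?_⟩
    · rw [mk_eq_mk_iff] at huv
      simpa [Prod.ext_iff] using huv
    · obtain ⟨z, rfl⟩ := Quotient.mk_surjective x
      exact ⟨(z.re, z.im), (mk_eq_mk_iff n _ _).2 (by simp)⟩
  rw [← Nat.card_eq_of_bijective g hg, Nat.card_prod, Nat.card_zmod, sq]

variable {R : Type*} [CommRing R] (p : ℕ) [Fact p.Prime] [CharP R p]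

theorem map_star_eq_pow_char (hp : p % 4 = 3) (f : GaussianInt →+* R) (z : GaussianInt) :
    f (star z) = f z ^ p := by
  have hint (n : ℤ) : (n : R) ^ p = n := by rw [← frobenius_def, map_intCast]
  have hi : f Zsqrtd.sqrtd ^ p = -f Zsqrtd.sqrtd := by
    obtain ⟨k, rfl⟩ : ∃ k, p = 4 * k + 3 := ⟨p / 4, by omega⟩
    have hsq : f Zsqrtd.sqrtd ^ 2 = -1 := by
      rw [sq, ← map_mul, Zsqrtd.dmuld, map_intCast, Int.cast_neg, Int.cast_one]
    calc f Zsqrtd.sqrtd ^ (4 * k + 3) = (f Zsqrtd.sqrtd ^ 2) ^ (2 * k + 1) * f Zsqrtd.sqrtd := by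
          ring
      _ = -f Zsqrtd.sqrtd := by rw [hsq, Odd.neg_one_pow ⟨k, rfl⟩, neg_one_mul]
  obtain ⟨x, y⟩ := z
  rw [Zsqrtd.star_mk, Zsqrtd.decompose, Zsqrtd.decompose]
  simp only [map_add, map_mul, map_intCast, add_pow_char, mul_pow, hint, hi]
  push_cast
  ring

theorem map_norm_eq_pow_succ_char (hp : p % 4 = 3) (f : GaussianInt →+* R) (z : GaussianInt) :
    (z.norm : R) = f z ^ (p + 1) := by
  rw [pow_succ', ← map_star_eq_pow_char p hp, ← map_mul, ← Zsqrtd.norm_eq_mul_conj, map_intCast]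

end GaussianInt

/-- For a rational prime `q ≡ 3 (mod 4)` (a Gaussian prime) and `a + bi` not divisible
by `q`, the class of `a + bi` in `ℤ[i]/qℤ[i]` is a square iff the Legendre symbol
`((a² + b²) / q)` equals `1`. -/
theorem stmt12 (q : ℕ) [Fact q.Prime] (hq3 : q % 4 = 3) (a b : ℤ)
    (h : ¬ ((q : GaussianInt) ∣ (⟨a, b⟩ : GaussianInt))) :
    IsSquare (Ideal.Quotient.mk (Ideal.span {(q : GaussianInt)}) (⟨a, b⟩ : GaussianInt)) ↔
      legendreSym q (a ^ 2 + b ^ 2) = 1 := by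
  have hprime : Prime (q : GaussianInt) :=
    GaussianInt.prime_of_nat_prime_of_mod_four_eq_three q hq3
  have hq2 : q ≠ 2 := by omega
  set I := span {(q : GaussianInt)}
  have : I.IsMaximal := PrincipalIdealRing.isMaximal_of_irreducible hprime.irreducible
  let := Quotient.field I
  have : CharP (GaussianInt ⧸ I) q := CharP.quotient _ q hprime.not_isUnit
  have hcard : Nat.card (GaussianInt ⧸ I) = q ^ 2 := GaussianInt.natCard_quotient_span_natCast q
  have : Finite (GaussianInt ⧸ I) := Nat.finite_of_card_ne_zero (by simp [hcard, NeZero.ne q])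
  let := Fintype.ofFinite (GaussianInt ⧸ I)
  have hx : Ideal.Quotient.mk I ⟨a, b⟩ ≠ 0 := by
    rwa [Ne, Quotient.eq_zero_iff_mem, mem_span_singleton]
  have hnorm :
      Ideal.Quotient.mk I ⟨a, b⟩ ^ (q + 1) = ZMod.castHom dvd_rfl _ ((a ^ 2 + b ^ 2 : ℤ)) := by
    rw [← GaussianInt.map_norm_eq_pow_succ_char q hq3, map_intCast, Zsqrtd.norm_def]
    push_cast
    ring
  have hc : ((a ^ 2 + b ^ 2 : ℤ) : ZMod q) ≠ 0 := fun h0 =>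
    hx (eq_zero_of_pow_eq_zero (hnorm.trans (by rw [h0, map_zero])))
  rw [legendreSym.eq_one_iff q hc]
  refine FiniteField.isSquare_iff_isSquare_of_pow_eq_map ?_ ?_ _ hx ?_ hnorm
  · rwa [ZMod.ringChar_zmod_n]
  · rwa [ringChar.eq (GaussianInt ⧸ I) q]
  · rw [Fintype.card_eq_nat_card, hcard, ZMod.card, sq,
      Nat.odd_mul_odd_div_two (by omega) (by omega)]
    ring
end

section
/- Let $\alpha, \beta$ be integers with $\alpha$ odd such that $p = \alpha^2 + \beta^2$ is a prime with $p \equiv 1 \pmod 4$. Then the Legendre symbol $\left(\frac{\alpha}{p}\right)$ equals $1$. -/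
/-!
Since `p ≡ 1 (mod 4)`, `-1` is a square mod `p`, so `(α/p) = (|α|/p)`, and Jacobi reciprocity
turns this into `J(p | |α|)`. Modulo `|α|` we have `p ≡ β²`, and `β` is prime to `α` because
`p` is squarefree, so `J(p | |α|) = J(β² | |α|) = 1`.
-/

open scoped NumberTheorySymbols

theorem Int.isCoprime_of_squarefree_sq_add_sq {a b : ℤ} (h : Squarefree (a ^ 2 + b ^ 2)) :
    IsCoprime a b := by
  rw [Int.isCoprime_iff_gcd_eq_one]
  have hdvd : (a.gcd b : ℤ) * a.gcd b ∣ a ^ 2 + b ^ 2 := by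
    rw [← sq]
    exact dvd_add (pow_dvd_pow_of_dvd (Int.gcd_dvd_left a b) 2)
      (pow_dvd_pow_of_dvd (Int.gcd_dvd_right a b) 2)
  exact Nat.isUnit_iff.mp (Int.ofNat_isUnit.mp (h _ hdvd))

theorem jacobiSym.sq_add_sq_natAbs_eq_one {a b : ℤ} (hab : IsCoprime a b) :
    J(a ^ 2 + b ^ 2 | a.natAbs) = 1 := by
  have hmod : (a ^ 2 + b ^ 2) % (a.natAbs : ℤ) = b ^ 2 % (a.natAbs : ℤ) := by
    simp [sq]
  rw [jacobiSym.mod_left' hmod]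
  apply jacobiSym.sq_one'
  rw [← Int.isCoprime_iff_gcd_eq_one, Int.natCast_natAbs]
  exact hab.symm.abs_right

theorem legendreSym.natAbs_of_mod_four_eq_one {p : ℕ} [Fact p.Prime] (hp : p % 4 = 1) (a : ℤ) :
    legendreSym p a.natAbs = legendreSym p a := by
  obtain ⟨n, rfl | rfl⟩ := Int.eq_nat_or_neg a
  · rw [Int.natAbs_natCast]
  · rw [Int.natAbs_neg, Int.natAbs_natCast, legendreSym.at_neg (by omega),
      ZMod.χ₄_nat_one_mod_four hp, one_mul]

/-- If `α` is odd and `p = α² + β²` is a prime `≡ 1 (mod 4)`, then the Legendre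
symbol `(α / p)` equals `1`. -/
theorem stmt14 (p : ℕ) [Fact p.Prime] (hp1 : p % 4 = 1) (α β : ℤ) (hα : Odd α)
    (hsum : (p : ℤ) = α ^ 2 + β ^ 2) :
    legendreSym p α = 1 := by
  have hcop : IsCoprime α β :=
    Int.isCoprime_of_squarefree_sq_add_sq
      (hsum ▸ Int.squarefree_natCast.mpr (Fact.out : p.Prime).squarefree)
  rw [← legendreSym.natAbs_of_mod_four_eq_one hp1, jacobiSym.legendreSym.to_jacobiSym,
    ← jacobiSym.quadratic_reciprocity_one_mod_four hp1 (Int.natAbs_odd.mpr hα), hsum]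
  exact jacobiSym.sq_add_sq_natAbs_eq_one hcop
end

section
/- Let $\pi = \alpha + \beta i$ be a prime element of $\mathbb{Z}[i]$ whose norm $p = \alpha^2 + \beta^2$ is a prime with $p \equiv 1 \pmod 4$. Then the residue class of $i$ in $\mathbb{Z}[i]/\pi\mathbb{Z}[i]$ is a square if and only if $(p-1)/4$ is even (equivalently, $p \equiv 1 \pmod 8$); that is, the Gaussian Legendre symbol $\left[\frac{i}{\pi}\right]$ equals $(-1)^{(p-1)/4}$. -/
lemma mulEquiv_isSquare_iff {M N : Type*} [Monoid M] [Monoid N] (e : M ≃* N) (a : M) :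
    IsSquare (e a) ↔ IsSquare a := by
  constructor
  · rintro ⟨s, hs⟩
    refine ⟨e.symm s, ?_⟩
    have := congrArg e.symm hs
    simpa using this
  · rintro ⟨r, rfl⟩
    exact ⟨e r, by simp⟩

/-- For a Gaussian prime `π = α + βi` of prime norm `p ≡ 1 (mod 4)`, the class of `i`
in `ℤ[i]/πℤ[i]` is a square iff `(p - 1)/4` is even; i.e. `[i/π] = (-1)^((p-1)/4)`. -/
theorem stmt15 (p : ℕ) (hp : p.Prime) (hp1 : p % 4 = 1) (α β : ℤ)
    (hprime : Prime (⟨α, β⟩ : GaussianInt))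
    (hnorm : Zsqrtd.norm (⟨α, β⟩ : GaussianInt) = (p : ℤ)) :
    IsSquare (Ideal.Quotient.mk (Ideal.span {(⟨α, β⟩ : GaussianInt)}) (⟨0, 1⟩ : GaussianInt)) ↔
      Even ((p - 1) / 4) := by
  haveI : Fact p.Prime := ⟨hp⟩
  have hnorm' : α * α + β * β = (p : ℤ) := by
    have := hnorm
    simp [Zsqrtd.norm] at this
    linarith
  -- β is nonzero mod p
  have hβ : (β : ZMod p) ≠ 0 := by
    intro h
    have hpβ : (p : ℤ) ∣ β := by
      exact_mod_cast (ZMod.intCast_zmod_eq_zero_iff_dvd β p).mp h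
    have hpα2 : (p : ℤ) ∣ α * α := by
      have h1 : (p : ℤ) ∣ β * β := hpβ.mul_left β
      have h2 : (p : ℤ) ∣ α * α + β * β := by rw [hnorm']
      simpa using dvd_sub h2 h1
    have hpα : (p : ℤ) ∣ α := (Int.Prime.dvd_mul' (by exact_mod_cast hp) hpα2).elim id id
    have hdvd : ((p : ℤ) * p) ∣ α * α + β * β :=
      dvd_add (mul_dvd_mul hpα hpα) (mul_dvd_mul hpβ hpβ)
    rw [hnorm'] at hdvd
    have hple := Int.le_of_dvd (by exact_mod_cast hp.pos) hdvd
    have hp2 : (2 : ℤ) ≤ p := by exact_mod_cast hp.two_le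
    nlinarith
  set u : ZMod p := -(α : ZMod p) * (β : ZMod p)⁻¹ with hu_def
  have hαβ : (α : ZMod p) * α + (β : ZMod p) * β = 0 := by
    have := congrArg (fun n : ℤ => (n : ZMod p)) hnorm'
    push_cast at this
    simpa using this
  have hu2 : u * u = -1 := by
    have hb : (β : ZMod p) * (β : ZMod p)⁻¹ = 1 := mul_inv_cancel₀ hβ
    have hα2 : (α : ZMod p) * α = -((β : ZMod p) * β) := by linear_combination hαβ
    calc u * u = ((α : ZMod p) * α) * ((β : ZMod p)⁻¹ * (β : ZMod p)⁻¹) := by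
          rw [hu_def]; ring
      _ = -((β : ZMod p) * β) * ((β : ZMod p)⁻¹ * (β : ZMod p)⁻¹) := by rw [hα2]
      _ = -(((β : ZMod p) * (β : ZMod p)⁻¹) * ((β : ZMod p) * (β : ZMod p)⁻¹)) := by ring
      _ = -1 := by rw [hb]; ring
  have hu2' : u * u = ((-1 : ℤ) : ZMod p) := by push_cast; exact hu2
  set φ : GaussianInt →+* ZMod p := Zsqrtd.lift ⟨u, hu2'⟩ with hφ
  have hφapp : ∀ z : GaussianInt, φ z = (z.re : ZMod p) + (z.im : ZMod p) * u := fun z => rfl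
  have hφπ : φ ⟨α, β⟩ = 0 := by
    rw [hφapp]
    simp only [hu_def]
    field_simp
    ring
  have hsurj : Function.Surjective φ := by
    intro x
    obtain ⟨n, rfl⟩ := ZMod.intCast_surjective x
    exact ⟨(n : GaussianInt), by rw [hφapp]; simp⟩
  have hmax : (Ideal.span {(⟨α, β⟩ : GaussianInt)}).IsMaximal :=
    PrincipalIdealRing.isMaximal_of_irreducible hprime.irreducible
  have hker : Ideal.span {(⟨α, β⟩ : GaussianInt)} = RingHom.ker φ := by
    refine hmax.eq_of_le ?_ ?_
    · intro h
      have : φ 1 = 0 := RingHom.mem_ker.mp (h ▸ Submodule.mem_top)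
      simp at this
    · rw [Ideal.span_le, Set.singleton_subset_iff]
      exact RingHom.mem_ker.mpr hφπ
  rw [hker]
  set e := RingHom.quotientKerEquivOfSurjective hsurj with he
  rw [← mulEquiv_isSquare_iff e.toMulEquiv]
  have : (e.toMulEquiv : _ → ZMod p) (Ideal.Quotient.mk (RingHom.ker φ) ⟨0, 1⟩) = u := by
    show e (Ideal.Quotient.mk (RingHom.ker φ) ⟨0, 1⟩) = u
    rw [he]
    have := RingHom.kerLift_mk φ (⟨0, 1⟩ : GaussianInt)
    simpa [hφapp] using (RingHom.kerLift_mk φ (⟨0, 1⟩ : GaussianInt)).symm ▸ (by rw [hφapp]; simp : φ ⟨0,1⟩ = u)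
  rw [this]
  have hu0 : u ≠ 0 := by
    intro h
    rw [h, mul_zero] at hu2
    exact one_ne_zero (neg_eq_zero.mp hu2.symm)
  rw [ZMod.euler_criterion p hu0]
  obtain ⟨k, hk⟩ : ∃ k, p = 4 * k + 1 := ⟨p / 4, by omega⟩
  have h1 : p / 2 = 2 * k := by omega
  have h2 : (p - 1) / 4 = k := by omega
  have hsq : u ^ 2 = -1 := by rw [sq]; exact hu2
  haveI : Fact (2 < p) := ⟨by have := hp.two_le; omega⟩
  rw [h1, h2, pow_mul, hsq, neg_one_pow_eq_one_iff_even (ZMod.neg_one_ne_one)]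
end
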